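/- arXiv:1309.0687 — 4 statements merged into one kernel-verified Lean document; each statement's English description precedes it below -/
import Mathlib

section
/- Fix the root pitch class 0 in ZMod 12. The admissible modal scales over a minor-seventh base-chord {0, 3, 7, 10} are exactly the sets {0, s1, 3, s3, 7, s5, 10} ⊆ ZMod 12 with s1 ∈ {1, 2}, s3 ∈ {5, 6}, s5 ∈ {8, 9}; there are exactly 8 such scales, and exactly 3 of them are not among the five standard modes Dorian {0,2,3,5,7,9,10}, Phrygian {0,1,3,5,7,8,10}, Eolian {0,2,3,5,7,8,10}, Dorian ♭2 {0,1,3,5,7,9,10} and Dorian ♯4 {0,2,3,6,7,9,10}: the special modes are the three scales {0,1,3,6,7,8,10}, {0,1,3,6,7,9,10} and {0,2,3,6,7,8,10}. -/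
/-- The admissible modal scales over the minor-seventh base-chord {0, 3, 7, 10}
rooted at 0: the sets {0, s1, 3, s3, 7, s5, 10} with s1 ∈ {1, 2}, s3 ∈ {5, 6},
s5 ∈ {8, 9}. -/
def min7Adm : Finset (Finset (ZMod 12)) :=
  ({1, 2} : Finset (ZMod 12)).biUnion fun s1 =>
    ({5, 6} : Finset (ZMod 12)).biUnion fun s3 =>
      ({8, 9} : Finset (ZMod 12)).image fun s5 =>
        ({0, s1, 3, s3, 7, s5, 10} : Finset (ZMod 12))

/-- The five standard modes over a minor-seventh chord: Dorian, Phrygian, Eolian,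
Dorian ♭2 and Dorian ♯4. -/
def min7Standard : Finset (Finset (ZMod 12)) :=
  { ({0, 2, 3, 5, 7, 9, 10} : Finset (ZMod 12)),
    ({0, 1, 3, 5, 7, 8, 10} : Finset (ZMod 12)),
    ({0, 2, 3, 5, 7, 8, 10} : Finset (ZMod 12)),
    ({0, 1, 3, 5, 7, 9, 10} : Finset (ZMod 12)),
    ({0, 2, 3, 6, 7, 9, 10} : Finset (ZMod 12)) }

open Finset

def min7Special : Finset (Finset (ZMod 12)) :=
  min7Adm.filter fun S => S ∉ min7Standard

theorem mem_min7Adm {S : Finset (ZMod 12)} :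
    S ∈ min7Adm ↔ ∃ s1 ∈ ({1, 2} : Finset (ZMod 12)),
      ∃ s3 ∈ ({5, 6} : Finset (ZMod 12)), ∃ s5 ∈ ({8, 9} : Finset (ZMod 12)),
        S = ({0, s1, 3, s3, 7, s5, 10} : Finset (ZMod 12)) := by
  simp only [min7Adm, mem_biUnion, mem_image, eq_comm (b := S)]

theorem min7Adm_eq : min7Adm =
    { {0, 1, 3, 5, 7, 8, 10}, {0, 1, 3, 5, 7, 9, 10}, {0, 1, 3, 6, 7, 8, 10},
      {0, 1, 3, 6, 7, 9, 10}, {0, 2, 3, 5, 7, 8, 10}, {0, 2, 3, 5, 7, 9, 10},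
      {0, 2, 3, 6, 7, 8, 10}, {0, 2, 3, 6, 7, 9, 10} } := by
  decide

theorem card_min7Adm : min7Adm.card = 8 := by
  rw [min7Adm_eq]; decide

theorem baseChord_subset_scale (s1 s3 s5 : ZMod 12) :
    ({0, 3, 7, 10} : Finset (ZMod 12)) ⊆ {0, s1, 3, s3, 7, s5, 10} := by
  intro x hx
  simp only [mem_insert, mem_singleton] at hx ⊢
  tauto

theorem card_eq_seven_of_mem_min7Adm {S : Finset (ZMod 12)} (hS : S ∈ min7Adm) :
    S.card = 7 := by
  rw [min7Adm_eq] at hS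
  fin_cases hS <;> decide

theorem min7Special_eq : min7Special =
    { {0, 1, 3, 6, 7, 8, 10}, {0, 1, 3, 6, 7, 9, 10}, {0, 2, 3, 6, 7, 8, 10} } := by
  rw [min7Special, min7Adm_eq]; decide

theorem card_min7Special : min7Special.card = 3 := by
  rw [min7Special_eq]; decide

/-- The admissible modal scales over the minor-seventh base-chord {0,3,7,10} are
exactly the sets {0, s1, 3, s3, 7, s5, 10} with s1 ∈ {1,2}, s3 ∈ {5,6}, s5 ∈ {8,9};
each is a 7-element set containing the base-chord; there are exactly 8 of them, and
exactly 3 are not standard modes: the special modes {0,1,3,6,7,8,10},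
{0,1,3,6,7,9,10} and {0,2,3,6,7,8,10}. -/
theorem min7_special_modes :
    (∀ S : Finset (ZMod 12),
      S ∈ min7Adm ↔ ∃ s1 ∈ ({1, 2} : Finset (ZMod 12)),
        ∃ s3 ∈ ({5, 6} : Finset (ZMod 12)), ∃ s5 ∈ ({8, 9} : Finset (ZMod 12)),
          S = ({0, s1, 3, s3, 7, s5, 10} : Finset (ZMod 12))) ∧
    (∀ S ∈ min7Adm, ({0, 3, 7, 10} : Finset (ZMod 12)) ⊆ S ∧ S.card = 7) ∧
    min7Adm.card = 8 ∧
    (min7Adm.filter fun S => S ∉ min7Standard).card = 3 ∧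
    (min7Adm.filter fun S => S ∉ min7Standard) =
      { ({0, 1, 3, 6, 7, 8, 10} : Finset (ZMod 12)),
        ({0, 1, 3, 6, 7, 9, 10} : Finset (ZMod 12)),
        ({0, 2, 3, 6, 7, 8, 10} : Finset (ZMod 12)) } := by
  refine ⟨fun S => mem_min7Adm, fun S hS => ⟨?_, card_eq_seven_of_mem_min7Adm hS⟩,
    card_min7Adm, card_min7Special, min7Special_eq⟩
  obtain ⟨s1, -, s3, -, s5, -, rfl⟩ := mem_min7Adm.mp hS
  exact baseChord_subset_scale s1 s3 s5
end

section
/- The graph Γ_maj7 associated to the major-seventh base-chord, namely the simple graph on Fin 9 with vertex labels (0 = I, 1 = aII, 2 = MII, 3 = MIII, 4 = aIV, 5 = PIV, 6 = PV, 7 = MVI, 8 = MVII) and edge set {0,1}, {0,2}, {1,3}, {2,3}, {3,4}, {3,5}, {4,6}, {5,6}, {6,7}, {7,8}, is connected and has exactly 10 edges; hence its first Betti number (edges − vertices + 1) equals 2, so τ(maj7) = 2 and the fundamental group of its realization is free on two generators. -/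
/-- Edge list of the graph Γ_maj7 on `Fin 9`, with vertex labels
0 = I, 1 = aII, 2 = MII, 3 = MIII, 4 = aIV, 5 = PIV, 6 = PV, 7 = MVI, 8 = MVII. -/
def maj7Edges : List (Fin 9 × Fin 9) :=
  [(0, 1), (0, 2), (1, 3), (2, 3), (3, 4), (3, 5), (4, 6), (5, 6), (6, 7), (7, 8)]

/-- The graph Γ_maj7 associated to the major-seventh base-chord. -/
def gammaMaj7 : SimpleGraph (Fin 9) :=
  SimpleGraph.fromRel fun i j => (i, j) ∈ maj7Edges

instance : DecidableRel gammaMaj7.Adj := fun i j =>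
  decidable_of_iff (i ≠ j ∧ ((i, j) ∈ maj7Edges ∨ (j, i) ∈ maj7Edges)) Iff.rfl

namespace SimpleGraph

variable {V : Type*} (G : SimpleGraph V)

theorem reachable_of_forall_exists_adj_lt [Preorder V] [WellFoundedLT V] (r : V)
    (h : ∀ v, v ≠ r → ∃ w < v, G.Adj v w) (v : V) : G.Reachable v r := by
  induction v using WellFoundedLT.induction with
  | _ v ih =>
    by_cases hv : v = r
    · exact hv ▸ Reachable.refl v
    · obtain ⟨w, hwv, hadj⟩ := h v hv
      exact hadj.reachable.trans (ih w hwv)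

theorem connected_of_forall_exists_adj_lt [Preorder V] [WellFoundedLT V] (r : V)
    (h : ∀ v, v ≠ r → ∃ w < v, G.Adj v w) : G.Connected :=
  G.connected_iff.2
    ⟨fun u v => (G.reachable_of_forall_exists_adj_lt r h u).trans
      (G.reachable_of_forall_exists_adj_lt r h v).symm, ⟨r⟩⟩

end SimpleGraph

theorem gammaMaj7_connected : gammaMaj7.Connected :=
  gammaMaj7.connected_of_forall_exists_adj_lt 0 (by decide)

theorem gammaMaj7_card_edgeFinset : gammaMaj7.edgeFinset.card = 10 := by decide

/-- Γ_maj7 is connected and has exactly 10 edges on its 9 vertices, so its first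
Betti number (edges − vertices + 1) equals 2: τ(maj7) = 2 and the fundamental
group of its realization is free on two generators. -/
theorem gammaMaj7_betti_two :
    gammaMaj7.Connected ∧
    gammaMaj7.edgeFinset.card = 10 ∧
    (gammaMaj7.edgeFinset.card : ℤ) - (Fintype.card (Fin 9) : ℤ) + 1 = 2 := by
  refine ⟨gammaMaj7_connected, gammaMaj7_card_edgeFinset, ?_⟩
  rw [gammaMaj7_card_edgeFinset, Fintype.card_fin]
  norm_num
end

section
/- The graph Γ_7 associated to the dominant-seventh base-chord, namely the simple graph on Fin 10 with vertex labels (0 = I, 1 = mII, 2 = MII, 3 = MIII, 4 = aIV, 5 = PIV, 6 = PV, 7 = mVI, 8 = MVI, 9 = mVII) and edge set {0,1}, {0,2}, {1,3}, {2,3}, {3,4}, {3,5}, {4,6}, {5,6}, {6,7}, {6,8}, {7,9}, {8,9}, is connected and has exactly 12 edges; hence its first Betti number (edges − vertices + 1) equals 3, so τ(7) = 3 and the fundamental group of its realization is free on three generators. The graphs Γ_−7 and Γ_−7♭5 have the same underlying structure (they are isomorphic to Γ_7 as abstract graphs), so likewise τ(−7) = τ(−7♭5) = 3. -/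
/-- Edge list of the graph Γ_7 on `Fin 10`, with vertex labels 0 = I, 1 = mII,
2 = MII, 3 = MIII, 4 = aIV, 5 = PIV, 6 = PV, 7 = mVI, 8 = MVI, 9 = mVII. -/
def dom7Edges : List (Fin 10 × Fin 10) :=
  [(0, 1), (0, 2), (1, 3), (2, 3), (3, 4), (3, 5), (4, 6), (5, 6),
   (6, 7), (6, 8), (7, 9), (8, 9)]

/-- The graph Γ_7 associated to the dominant-seventh base-chord. -/
def gammaDom7 : SimpleGraph (Fin 10) :=
  SimpleGraph.fromRel fun i j => (i, j) ∈ dom7Edges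

/-- The graph Γ_−7 associated to the minor-seventh base-chord (same underlying
structure as Γ_7, with vertex 3 = mIII). -/
def gammaMin7 : SimpleGraph (Fin 10) :=
  SimpleGraph.fromRel fun i j => (i, j) ∈ dom7Edges

/-- The graph Γ_−7♭5 associated to the half-diminished base-chord (same underlying
structure as Γ_7, with vertex labels 3 = mIII, 4 = dIV, 6 = dV). -/
def gammaHalfDim : SimpleGraph (Fin 10) :=
  SimpleGraph.fromRel fun i j => (i, j) ∈ dom7Edges

instance : DecidableRel gammaDom7.Adj := fun i j =>
  decidable_of_iff (i ≠ j ∧ ((i, j) ∈ dom7Edges ∨ (j, i) ∈ dom7Edges)) Iff.rfl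

instance : DecidableRel gammaMin7.Adj := fun i j =>
  decidable_of_iff (i ≠ j ∧ ((i, j) ∈ dom7Edges ∨ (j, i) ∈ dom7Edges)) Iff.rfl

instance : DecidableRel gammaHalfDim.Adj := fun i j =>
  decidable_of_iff (i ≠ j ∧ ((i, j) ∈ dom7Edges ∨ (j, i) ∈ dom7Edges)) Iff.rfl

theorem SimpleGraph.connected_of_forall_ne_bot_exists_lt_adj {V : Type*} [Preorder V]
    [WellFoundedLT V] [OrderBot V] {G : SimpleGraph V}
    (h : ∀ v, v ≠ ⊥ → ∃ u < v, G.Adj u v) : G.Connected := by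
  refine G.connected_iff_exists_forall_reachable.2 ⟨⊥, fun v => ?_⟩
  induction v using WellFoundedLT.induction with
  | _ v ih =>
    by_cases hv : v = ⊥
    · exact hv ▸ .rfl
    · obtain ⟨u, huv, hadj⟩ := h v hv
      exact (ih u huv).trans hadj.reachable

theorem gammaDom7_connected : gammaDom7.Connected :=
  SimpleGraph.connected_of_forall_ne_bot_exists_lt_adj (by decide)

theorem card_edgeFinset_gammaDom7 : gammaDom7.edgeFinset.card = 12 := by
  decide

/- The three graphs are built from the same edge list and differ only in the names of the
scale degrees, so the identity of `Fin 10` is an isomorphism. -/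
def gammaDom7IsoMin7 : gammaDom7 ≃g gammaMin7 := .refl

def gammaDom7IsoHalfDim : gammaDom7 ≃g gammaHalfDim := .refl

theorem betti_eq_three_of_card_edgeFinset_eq {G : SimpleGraph (Fin 10)} [Fintype G.edgeSet]
    (h : G.edgeFinset.card = 12) :
    (G.edgeFinset.card : ℤ) - (Fintype.card (Fin 10) : ℤ) + 1 = 3 := by
  rw [h, Fintype.card_fin]
  norm_num

/-- Γ_7 is connected and has exactly 12 edges on its 10 vertices, so its first
Betti number (edges − vertices + 1) equals 3: τ(7) = 3 and the fundamental group
of its realization is free on three generators. The graphs Γ_−7 and Γ_−7♭5 are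
isomorphic to Γ_7 as abstract graphs, so likewise they are connected with 12 edges
and Betti number 3, i.e. τ(−7) = τ(−7♭5) = 3. -/
theorem gammaDom7_betti_three :
    gammaDom7.Connected ∧
    gammaDom7.edgeFinset.card = 12 ∧
    (gammaDom7.edgeFinset.card : ℤ) - (Fintype.card (Fin 10) : ℤ) + 1 = 3 ∧
    Nonempty (gammaDom7 ≃g gammaMin7) ∧
    Nonempty (gammaDom7 ≃g gammaHalfDim) ∧
    gammaMin7.Connected ∧
    gammaMin7.edgeFinset.card = 12 ∧
    (gammaMin7.edgeFinset.card : ℤ) - (Fintype.card (Fin 10) : ℤ) + 1 = 3 ∧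
    gammaHalfDim.Connected ∧
    gammaHalfDim.edgeFinset.card = 12 ∧
    (gammaHalfDim.edgeFinset.card : ℤ) - (Fintype.card (Fin 10) : ℤ) + 1 = 3 := by
  have card_min7 : gammaMin7.edgeFinset.card = 12 :=
    gammaDom7IsoMin7.card_edgeFinset_eq ▸ card_edgeFinset_gammaDom7
  have card_halfDim : gammaHalfDim.edgeFinset.card = 12 :=
    gammaDom7IsoHalfDim.card_edgeFinset_eq ▸ card_edgeFinset_gammaDom7
  exact ⟨gammaDom7_connected, card_edgeFinset_gammaDom7,
    betti_eq_three_of_card_edgeFinset_eq card_edgeFinset_gammaDom7,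
    ⟨gammaDom7IsoMin7⟩, ⟨gammaDom7IsoHalfDim⟩,
    gammaDom7IsoMin7.connected_iff.1 gammaDom7_connected, card_min7,
    betti_eq_three_of_card_edgeFinset_eq card_min7,
    gammaDom7IsoHalfDim.connected_iff.1 gammaDom7_connected, card_halfDim,
    betti_eq_three_of_card_edgeFinset_eq card_halfDim⟩
end

section
/- Let X be a topological space and A ⊆ X a subspace such that the pair (X, A) has the homotopy extension property (every continuous map X → Y together with a homotopy of its restriction to A extends to a homotopy of the map on all of X, for every space Y). If A is contractible (the inclusion-induced identity of A is homotopic to a constant map within A), then the quotient map q : X → X/A, collapsing A to a point, is a homotopy equivalence. -/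
open unitInterval

/-- The setoid on `X` identifying all points of `A` to a single point (and nothing
else); its quotient is the space `X/A`. -/
def collapseSetoid {X : Type*} (A : Set X) : Setoid X where
  r x y := x = y ∨ (x ∈ A ∧ y ∈ A)
  iseqv := by
    constructor
    · intro x; exact Or.inl rfl
    · intro x y h
      rcases h with rfl | h
      · exact Or.inl rfl
      · exact Or.inr ⟨h.2, h.1⟩
    · intro x y z hxy hyz
      rcases hxy with rfl | hxy
      · exact hyz
      · rcases hyz with rfl | hyz
        · exact Or.inr hxy
        · exact Or.inr ⟨hxy.1, hyz.2⟩

/-- The pair `(X, A)` has the homotopy extension property: for every space `Y`,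
every continuous map `f : X → Y` and every homotopy `H : A × I → Y` of the
restriction of `f` to `A` (i.e. with `H (a, 0) = f a`), there is a homotopy
`G : X × I → Y` extending `H` and starting at `f`. -/
def HasHEP (X : Type*) [TopologicalSpace X] (A : Set X) : Prop :=
  ∀ (Y : Type) [TopologicalSpace Y] (f : C(X, Y)) (H : C(A × I, Y)),
    (∀ a : A, H (a, 0) = f a) →
      ∃ G : C(X × I, Y),
        (∀ x : X, G (x, 0) = f x) ∧ ∀ (a : A) (t : I), G ((a : X), t) = H (a, t)

/-!
By the homotopy extension property, a contraction of `A` extends to a homotopy `F` from `id_X`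
to a map `f`; every stage of `F` maps `A` into `A`, and `f` sends `A` to the contraction point.
So `f = k ∘ q` for a map `k : X/A → X`, and `F` descends to a homotopy on `X/A` from the identity
to `q ∘ k`.
-/

open ContinuousMap Set Topology

section Collapse

variable {X : Type*} [TopologicalSpace X] {A : Set X}

omit [TopologicalSpace X] in
theorem collapseSetoid.eq_of_rel {Z : Type*} {f : X → Z} (hf : ∀ a ∈ A, ∀ b ∈ A, f a = f b)
    {x y : X} (hxy : collapseSetoid A x y) : f x = f y := by
  rcases hxy with rfl | ⟨hx, hy⟩
  · rfl
  · exact hf x hx y hy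

variable (A) in
def collapseMap : C(X, Quotient (collapseSetoid A)) :=
  ⟨Quotient.mk _, continuous_quotient_mk'⟩

theorem isQuotientMap_collapseMap : IsQuotientMap (collapseMap A) :=
  isQuotientMap_quot_mk

theorem collapseMap_eq_of_mem {a b : X} (ha : a ∈ A) (hb : b ∈ A) :
    collapseMap A a = collapseMap A b :=
  Quotient.sound (Or.inr ⟨ha, hb⟩)

def collapseLift {Y : Type*} [TopologicalSpace Y] (f : C(X, Y))
    (hf : ∀ a ∈ A, ∀ b ∈ A, f a = f b) : C(Quotient (collapseSetoid A), Y) :=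
  ⟨Quotient.lift f fun _ _ ↦ collapseSetoid.eq_of_rel hf,
    f.continuous.quotient_lift fun _ _ ↦ collapseSetoid.eq_of_rel hf⟩

def collapseInduced (g : C(X, X)) (hg : MapsTo g A A) :
    C(Quotient (collapseSetoid A), Quotient (collapseSetoid A)) :=
  collapseLift ((collapseMap A).comp g) fun _ ha _ hb ↦ collapseMap_eq_of_mem (hg ha) (hg hb)

theorem collapseInduced_id : collapseInduced (.id X) (mapsTo_id A) = .id _ := by
  ext y
  induction y using Quotient.ind
  rfl

theorem collapseInduced_eq_comp_collapseLift (f : C(X, X)) (hf : ∀ a ∈ A, ∀ b ∈ A, f a = f b)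
    (hfA : MapsTo f A A) : collapseInduced f hfA = (collapseMap A).comp (collapseLift f hf) := by
  ext y
  induction y using Quotient.ind
  rfl

theorem ContinuousMap.HomotopyWith.mapsTo {f₀ f₁ : C(X, X)}
    (F : HomotopyWith f₀ f₁ fun g ↦ MapsTo g A A) (t : I) : MapsTo (fun x ↦ F (t, x)) A A :=
  F.prop t

def ContinuousMap.HomotopyWith.collapse {f₀ f₁ : C(X, X)}
    (F : HomotopyWith f₀ f₁ fun g ↦ MapsTo g A A) (h₀ : MapsTo f₀ A A) (h₁ : MapsTo f₁ A A) :
    Homotopy (collapseInduced f₀ h₀) (collapseInduced f₁ h₁) where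
  toFun p := Quotient.lift (fun x ↦ collapseMap A (F (p.1, x)))
    (fun _ _ ↦ collapseSetoid.eq_of_rel fun _ ha _ hb ↦
      collapseMap_eq_of_mem (F.mapsTo p.1 ha) (F.mapsTo p.1 hb)) p.2
  continuous_toFun := isQuotientMap_collapseMap.continuous_lift_prod_right
    ((collapseMap A).continuous.comp F.continuous)
  map_zero_left y := by
    induction y using Quotient.ind with | _ x => exact congrArg (collapseMap A) (F.apply_zero x)
  map_one_left y := by
    induction y using Quotient.ind with | _ x => exact congrArg (collapseMap A) (F.apply_one x)

def collapseHomotopyEquiv {f : C(X, X)} (F : HomotopyWith (.id X) f fun g ↦ MapsTo g A A)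
    (hf : ∀ a ∈ A, ∀ b ∈ A, f a = f b) : HomotopyEquiv X (Quotient (collapseSetoid A)) where
  toFun := collapseMap A
  invFun := collapseLift f hf
  left_inv := ⟨F.toHomotopy.symm⟩
  right_inv := by
    have hfA : MapsTo f A A := by simpa using F.mapsTo 1
    rw [← collapseInduced_eq_comp_collapseLift f hf hfA, ← collapseInduced_id]
    exact ⟨(F.collapse (mapsTo_id A) hfA).symm⟩

end Collapse

theorem HasHEP.exists_homotopy {X : Type*} [TopologicalSpace X] {A : Set X} (hep : HasHEP X A)
    {Y : Type} [TopologicalSpace Y] (f : C(X, Y)) (H : C(I × A, Y)) (hH : ∀ a, H (0, a) = f a) :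
    ∃ (g : C(X, Y)) (F : f.Homotopy g), ∀ (t : I) (a : A), F (t, a) = H (t, a) := by
  obtain ⟨G, hG₀, hGA⟩ := hep Y f (H.comp prodSwap) hH
  refine ⟨G.comp ⟨fun x ↦ (x, 1), by fun_prop⟩,
    ⟨G.comp prodSwap, fun x ↦ hG₀ x, fun _ ↦ rfl⟩, fun t a ↦ hGA a t⟩

theorem HasHEP.exists_homotopyWith_id_of_contractible {X : Type} [TopologicalSpace X] {A : Set X}
    (hep : HasHEP X A) [ContractibleSpace A] :
    ∃ f : C(X, X), (∀ a ∈ A, ∀ b ∈ A, f a = f b) ∧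
      Nonempty (HomotopyWith (.id X) f fun g ↦ MapsTo g A A) := by
  obtain ⟨a₀, ⟨K⟩⟩ := id_nullhomotopic A
  let K' : C(I × A, X) := (⟨Subtype.val, continuous_subtype_val⟩ : C(A, X)).comp K.toContinuousMap
  obtain ⟨f, F, hFA⟩ := hep.exists_homotopy (.id X) K' fun a ↦ congrArg Subtype.val (K.apply_zero a)
  have hf : ∀ a : A, f a = a₀ := fun a ↦ by
    rw [← F.apply_one, hFA]
    exact congrArg Subtype.val (K.apply_one a)
  refine ⟨f, fun a ha b hb ↦ (hf ⟨a, ha⟩).trans (hf ⟨b, hb⟩).symm, ⟨F, fun t a ha ↦ ?_⟩⟩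
  change F (t, a) ∈ A
  rw [hFA t ⟨a, ha⟩]
  exact (K (t, ⟨a, ha⟩)).2

/-- If the pair `(X, A)` has the homotopy extension property and `A` is
contractible, then the quotient map `q : X → X/A`, collapsing `A` to a point, is a
homotopy equivalence. -/
theorem quotient_map_homotopyEquiv_of_hep_of_contractible
    {X : Type} [TopologicalSpace X] (A : Set X)
    (hep : HasHEP X A) (hA : ContractibleSpace A) :
    ∃ h : ContinuousMap.HomotopyEquiv X (Quotient (collapseSetoid A)),
      ⇑h.toFun = Quotient.mk (collapseSetoid A) := by
  obtain ⟨f, hf, ⟨F⟩⟩ := hep.exists_homotopyWith_id_of_contractible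
  exact ⟨collapseHomotopyEquiv F hf, rfl⟩
end
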